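/- For 0 < |q| < 1, the ₁φ₁ series with lower parameter 0 and argument −q evaluates as ₁φ₁(a; 0; q, −q) = (aq; q²)_∞ / (q; q²)_∞. -/

import Mathlib

open scoped BigOperators

/-- q-shifted factorial (a;q)_j -/
noncomputable def qPoch (a q : ℂ) (j : ℕ) : ℂ :=
  ∏ i ∈ Finset.range j, (1 - a * q ^ i)

/-- infinite q-shifted factorial (a;q)_∞ -/
noncomputable def qPochInf (a q : ℂ) : ℂ :=
  ∏' j : ℕ, (1 - a * q ^ j)

/-- basic hypergeometric series ₁φ₁(a; c; q, x) -/
noncomputable def phi11 (a c q x : ℂ) : ℂ :=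
  ∑' j : ℕ, qPoch a q j / (qPoch q q j * qPoch c q j) *
    (-1) ^ j * q ^ (j * (j - 1) / 2) * x ^ j

/-- basic hypergeometric series ₀φ₁(–; c; q, x) -/
noncomputable def phi01 (c q x : ℂ) : ℂ :=
  ∑' j : ℕ, q ^ (j * (j - 1)) * x ^ j / (qPoch q q j * qPoch c q j)

/-- basic hypergeometric series ₂φ₁(a, b; c; q, x) -/
noncomputable def phi21 (a b c q x : ℂ) : ℂ :=
  ∑' j : ℕ, qPoch a q j * qPoch b q j / (qPoch q q j * qPoch c q j) * x ^ j


/-!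
With lower parameter `0` the signs cancel, and `f w := ₁φ₁(w; 0; q, -q)` is
`∑ (w; q)ₙ q^(n(n+1)/2) / (q; q)ₙ`. The terms of `f w - (1 - q w) f (q² w)` telescope against
`vₙ = w q^(n+1)` times the `n`-th term of `f (w q)`, so `f w = (1 - q w) f (q² w)`; iterating and
using continuity of `f` at `0` gives `f w = (q w; q²)_∞ f 0`. At `w = 1` only the `n = 0` term
survives, so `1 = (q; q²)_∞ f 0`, and dividing eliminates the unknown constant `f 0`.
-/
open Filter Topology

lemma qPoch_succ (a q : ℂ) (n : ℕ) : qPoch a q (n + 1) = qPoch a q n * (1 - a * q ^ n) :=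
  Finset.prod_range_succ _ _

lemma qPoch_succ' (a q : ℂ) (n : ℕ) : qPoch a q (n + 1) = (1 - a) * qPoch (a * q) q n := by
  simp only [qPoch, Finset.prod_range_succ', pow_zero, mul_one, pow_succ', mul_assoc]
  exact mul_comm _ _

lemma norm_qPoch_le {q : ℂ} (hq : ‖q‖ ≤ 1) (a : ℂ) (n : ℕ) : ‖qPoch a q n‖ ≤ (1 + ‖a‖) ^ n := by
  rw [qPoch, norm_prod]
  calc ∏ i ∈ Finset.range n, ‖1 - a * q ^ i‖ ≤ ∏ _i ∈ Finset.range n, (1 + ‖a‖) := by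
        gcongr with i
        calc ‖1 - a * q ^ i‖ ≤ 1 + ‖a‖ * ‖q‖ ^ i := by
              simpa using norm_sub_le (1 : ℂ) (a * q ^ i)
          _ ≤ 1 + ‖a‖ := by
              gcongr; exact mul_le_of_le_one_right (norm_nonneg a) (pow_le_one₀ (norm_nonneg q) hq)
    _ = (1 + ‖a‖) ^ n := by simp

lemma one_sub_norm_pow_le_norm_qPoch {a q : ℂ} (ha : ‖a‖ ≤ 1) (hq : ‖q‖ ≤ 1) (n : ℕ) :
    (1 - ‖a‖) ^ n ≤ ‖qPoch a q n‖ := by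
  rw [qPoch, norm_prod]
  calc (1 - ‖a‖) ^ n = ∏ _i ∈ Finset.range n, (1 - ‖a‖) := by simp
    _ ≤ ∏ i ∈ Finset.range n, ‖1 - a * q ^ i‖ := by
        gcongr with i
        calc 1 - ‖a‖ ≤ 1 - ‖a‖ * ‖q‖ ^ i := by
              gcongr; exact mul_le_of_le_one_right (norm_nonneg a) (pow_le_one₀ (norm_nonneg q) hq)
          _ ≤ ‖1 - a * q ^ i‖ := by simpa using norm_sub_norm_le (1 : ℂ) (a * q ^ i)

lemma qPoch_self_ne_zero {q : ℂ} (hq : ‖q‖ < 1) (n : ℕ) : qPoch q q n ≠ 0 :=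
  norm_pos_iff.1 <| (pow_pos (sub_pos.2 hq) n).trans_le <|
    one_sub_norm_pow_le_norm_qPoch hq.le hq.le n

lemma multipliable_one_sub_mul_pow {q : ℂ} (hq : ‖q‖ < 1) (a : ℂ) :
    Multipliable fun j : ℕ => 1 - a * q ^ j := by
  simpa [sub_eq_add_neg] using multipliable_one_add_of_summable (f := fun j : ℕ => -(a * q ^ j))
    (by simpa using (summable_geometric_of_lt_one (norm_nonneg q) hq).mul_left ‖a‖)

lemma tendsto_qPoch_qPochInf {q : ℂ} (hq : ‖q‖ < 1) (a : ℂ) :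
    Tendsto (qPoch a q) atTop (𝓝 (qPochInf a q)) :=
  (multipliable_one_sub_mul_pow hq a).hasProd.tendsto_prod_nat

theorem apply_eq_qPochInf_mul_apply_zero {f : ℂ → ℂ} {c Q : ℂ} (hQ : ‖Q‖ < 1)
    (hf : ∀ w, f w = (1 - c * w) * f (Q * w)) (hf0 : ContinuousAt f 0) (z : ℂ) :
    f z = qPochInf (c * z) Q * f 0 := by
  have hiter : ∀ N, f z = qPoch (c * z) Q N * f (Q ^ N * z) := by
    intro N
    induction N with
    | zero => simp [qPoch]
    | succ N ih =>
      rw [ih, hf (Q ^ N * z), qPoch_succ, pow_succ', mul_assoc Q]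
      ring
  have hlim : Tendsto (fun N => Q ^ N * z) atTop (𝓝 0) := by
    simpa using (tendsto_pow_atTop_nhds_zero_of_norm_lt_one hQ).mul_const z
  exact tendsto_nhds_unique (tendsto_const_nhds.congr hiter)
    ((tendsto_qPoch_qPochInf hQ _).mul (hf0.tendsto.comp hlim))

lemma summable_pow_mul_pow_triangle (C : ℝ) {r : ℝ} (hr0 : 0 ≤ r) (hr1 : r < 1) :
    Summable fun n : ℕ => C ^ n * r ^ (n * (n - 1) / 2) := by
  refine summable_of_ratio_norm_eventually_le (r := 1 / 2) (by norm_num) ?_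
  have hsmall : ∀ᶠ n : ℕ in atTop, |C| * r ^ n ≤ 1 / 2 :=
    ((tendsto_pow_atTop_nhds_zero_of_lt_one hr0 hr1).const_mul |C|).eventually_le_const
      (by norm_num)
  filter_upwards [hsmall] with n hn
  rw [Nat.triangle_succ, pow_succ, pow_add]
  calc ‖C ^ n * C * (r ^ (n * (n - 1) / 2) * r ^ n)‖
      = |C| * r ^ n * ‖C ^ n * r ^ (n * (n - 1) / 2)‖ := by
        simp only [norm_mul, norm_pow, Real.norm_eq_abs, abs_of_nonneg hr0]; ring
    _ ≤ 1 / 2 * ‖C ^ n * r ^ (n * (n - 1) / 2)‖ := by gcongr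

lemma tsum_eq_zero_of_telescoping {E : Type*} [NormedAddCommGroup E] {v d : ℕ → E}
    (hv : Summable v) (hd0 : d 0 = v 0) (hd : ∀ n, d (n + 1) = v (n + 1) - v n) :
    ∑' n, d n = 0 := by
  have hv' : Summable fun n => v (n + 1) := (summable_nat_add_iff 1).2 hv
  rw [tsum_eq_zero_add' (by simpa only [hd] using hv'.sub hv), hd0]
  simp only [hd]
  rw [hv'.tsum_sub hv, hv.tsum_eq_zero_add]
  abel

noncomputable def phi11Term (q w : ℂ) (n : ℕ) : ℂ :=
  qPoch w q n / qPoch q q n * q ^ (n * (n - 1) / 2) * q ^ n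

lemma phi11_zero_neg_self (a q : ℂ) : phi11 a 0 q (-q) = ∑' n, phi11Term q a n := by
  refine tsum_congr fun n => ?_
  have hsign : (-1 : ℂ) ^ n * (-q) ^ n = q ^ n := by rw [← mul_pow, neg_one_mul, neg_neg]
  simp only [phi11Term, qPoch, zero_mul, sub_zero, Finset.prod_const_one, mul_one]
  rw [← hsign]
  ring

lemma norm_phi11Term_le {q : ℂ} (hq : ‖q‖ < 1) {w : ℂ} {R : ℝ} (hw : ‖w‖ ≤ R) (n : ℕ) :
    ‖phi11Term q w n‖ ≤ ((1 + R) / (1 - ‖q‖)) ^ n * ‖q‖ ^ (n * (n - 1) / 2) := by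
  have hden := one_sub_norm_pow_le_norm_qPoch hq.le hq.le n
  rw [phi11Term, norm_mul, norm_mul, norm_div, norm_pow, norm_pow, div_pow]
  calc ‖qPoch w q n‖ / ‖qPoch q q n‖ * ‖q‖ ^ (n * (n - 1) / 2) * ‖q‖ ^ n
      ≤ (1 + R) ^ n / (1 - ‖q‖) ^ n * ‖q‖ ^ (n * (n - 1) / 2) * 1 := by
        have hnum : ‖qPoch w q n‖ ≤ (1 + R) ^ n := (norm_qPoch_le hq.le w n).trans
          (pow_le_pow_left₀ (by positivity) (by linarith) n)
        have hfrac : ‖qPoch w q n‖ / ‖qPoch q q n‖ ≤ (1 + R) ^ n / (1 - ‖q‖) ^ n :=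
          div_le_div₀ ((norm_nonneg _).trans hnum) hnum (pow_pos (sub_pos.2 hq) n) hden
        have hnn : 0 ≤ (1 + R) ^ n / (1 - ‖q‖) ^ n :=
          (div_nonneg (norm_nonneg _) (norm_nonneg _)).trans hfrac
        gcongr
        exact pow_le_one₀ (norm_nonneg q) hq.le
    _ = _ := mul_one _

lemma summable_phi11Term {q : ℂ} (hq : ‖q‖ < 1) (w : ℂ) : Summable (phi11Term q w) :=
  .of_norm_bounded (summable_pow_mul_pow_triangle _ (norm_nonneg q) hq)
    (norm_phi11Term_le hq le_rfl)

lemma continuousAt_tsum_phi11Term {q : ℂ} (hq : ‖q‖ < 1) :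
    ContinuousAt (fun w => ∑' n, phi11Term q w n) 0 := by
  refine ContinuousOn.continuousAt ?_ (Metric.closedBall_mem_nhds 0 one_pos)
  refine continuousOn_tsum (fun n => Continuous.continuousOn ?_)
    (summable_pow_mul_pow_triangle _ (norm_nonneg q) hq)
    (fun n w hw => norm_phi11Term_le hq (mem_closedBall_zero_iff.1 hw) n)
  unfold phi11Term qPoch
  fun_prop

lemma phi11Term_succ_sub {q : ℂ} (hq : ‖q‖ < 1) (w : ℂ) (m : ℕ) :
    phi11Term q w (m + 1) - (1 - q * w) * phi11Term q (q ^ 2 * w) (m + 1)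
      = w * q ^ (m + 2) * phi11Term q (w * q) (m + 1) - w * q ^ (m + 1) * phi11Term q (w * q) m := by
  have hPq := qPoch_self_ne_zero hq m
  have hq1 : 1 - q * q ^ m ≠ 0 := by
    have := qPoch_self_ne_zero hq (m + 1)
    rw [qPoch_succ] at this
    exact right_ne_zero_of_mul this
  have hshift : (1 - q * w) * qPoch (q ^ 2 * w) q (m + 1)
      = qPoch (w * q) q m * (1 - w * q * q ^ m) * (1 - w * q * q ^ (m + 1)) := by
    rw [show q ^ 2 * w = w * q * q by ring, mul_comm q w, ← qPoch_succ', qPoch_succ, qPoch_succ]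
  have hfac : (1 - q * w) * phi11Term q (q ^ 2 * w) (m + 1)
      = (1 - q * w) * qPoch (q ^ 2 * w) q (m + 1) / qPoch q q (m + 1)
        * q ^ ((m + 1) * (m + 1 - 1) / 2) * q ^ (m + 1) := by
    simp only [phi11Term]; ring
  rw [hfac, hshift]
  simp only [phi11Term, Nat.triangle_succ, qPoch_succ' w, qPoch_succ (w * q), qPoch_succ q q,
    pow_add, pow_succ]
  field_simp
  ring

lemma tsum_phi11Term_eq_mul {q : ℂ} (hq : ‖q‖ < 1) (w : ℂ) :
    ∑' n, phi11Term q w n = (1 - q * w) * ∑' n, phi11Term q (q ^ 2 * w) n := by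
  have htail : Summable fun n => w * q ^ (n + 1) * phi11Term q (w * q) n :=
    .of_norm_bounded ((summable_phi11Term hq (w * q)).norm.mul_left ‖w‖) fun n => by
      rw [norm_mul, norm_mul, norm_pow]
      gcongr
      exact mul_le_of_le_one_right (norm_nonneg w) (pow_le_one₀ (norm_nonneg q) hq.le)
  rw [← sub_eq_zero, ← tsum_mul_left,
    ← (summable_phi11Term hq w).tsum_sub ((summable_phi11Term hq _).mul_left _)]
  exact tsum_eq_zero_of_telescoping htail (by simp [phi11Term, qPoch]; ring)
    (phi11Term_succ_sub hq w)

lemma tsum_phi11Term_one (q : ℂ) : ∑' n, phi11Term q 1 n = 1 := by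
  rw [tsum_eq_single 0 fun n hn => ?_]
  · simp [phi11Term, qPoch]
  · obtain ⟨m, rfl⟩ := Nat.exists_eq_succ_of_ne_zero hn
    simp [phi11Term, qPoch_succ']

theorem phi11_eval_at_neg_q_general (q a : ℂ) (h1 : ‖q‖ < 1) :
    phi11 a 0 q (-q) = qPochInf (a * q) (q ^ 2) / qPochInf q (q ^ 2) := by
  have hq2 : ‖q ^ 2‖ < 1 := by rw [norm_pow]; exact pow_lt_one₀ (norm_nonneg q) h1 two_ne_zero
  have hprod := apply_eq_qPochInf_mul_apply_zero hq2 (tsum_phi11Term_eq_mul h1)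
    (continuousAt_tsum_phi11Term h1)
  have hone : qPochInf q (q ^ 2) * ∑' n, phi11Term q 0 n = 1 := by
    simpa [tsum_phi11Term_one] using (hprod 1).symm
  rw [phi11_zero_neg_self, hprod a, mul_comm q a, eq_div_iff (left_ne_zero_of_mul_eq_one hone),
    mul_assoc, mul_comm _ (qPochInf _ _), hone, mul_one]

theorem phi11_eval_at_neg_q (q a : ℂ) (h0 : 0 < ‖q‖) (h1 : ‖q‖ < 1) :
    phi11 a 0 q (-q) = qPochInf (a * q) (q ^ 2) / qPochInf q (q ^ 2) :=
  phi11_eval_at_neg_q_general q a h1
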